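/- Let μ be a positive measure on ℂ of finite order, i.e. ord[μ] := limsup_{x→∞} log(1 + μ^rad(x))/log x < ∞, and let r : ℂ → (0,1] satisfy inf_z log r(z)/log(2+|z|) > -∞. Then for every d ∈ (0,2] there exists a function p : ℂ → (0,∞) with inf_z log p(z)/log(2+|z|) > -∞ and p(z) ≤ r(z) for all z, such that the set E := { z : ∫₀^{p(z)} μ_z(t)/t dt > 1/d } satisfies 𝔪_d^r(E ∩ S) ≤ sup_{z∈S} r(z) ≤ 1 for every Borel set S ⊆ ℂ. -/

import Mathlib

open MeasureTheory Metric Set ENNReal Real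

/-- The `d`-dimensional Hausdorff content with variable covering radius `r`. -/
noncomputable def hausdorffContentVar (d : ℝ) (r : ℂ → ℝ≥0∞) (S : Set ℂ) : ℝ≥0∞ :=
  ⨅ (z : ℕ → ℂ) (ρ : ℕ → ℝ) (_ : ∀ k, 0 ≤ ρ k)
    (_ : ∀ k, ENNReal.ofReal (ρ k) ≤ r (z k))
    (_ : S ⊆ ⋃ k, Metric.closedBall (z k) (ρ k)),
    ∑' k, ENNReal.ofReal (Real.pi ^ (d / 2) / Real.Gamma (1 + d / 2) * ρ k ^ d)

lemma orderBound (μ : Measure ℂ) [IsFiniteMeasureOnCompacts μ]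
    (hord : Filter.limsup
        (fun x : ℝ =>
          ((Real.log (1 + (μ (Metric.closedBall 0 x)).toReal) / Real.log x : ℝ) : EReal))
        Filter.atTop < (⊤ : EReal)) :
    ∃ (N : ℕ) (C : ℝ), 1 ≤ C ∧ ∀ x : ℝ, 0 ≤ x →
      μ (Metric.closedBall 0 x) ≤ ENNReal.ofReal (C * (2 + x) ^ (N : ℝ)) := by
  obtain ⟨b, hb, -⟩ := EReal.exists_between_coe_real hord
  have hev := Filter.eventually_lt_of_limsup_lt hb
  rw [Filter.eventually_atTop] at hev
  obtain ⟨x₀', hx₀'⟩ := hev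
  set x₀ := max x₀' 2 with hx₀def
  refine ⟨⌈b⌉₊, (μ (Metric.closedBall 0 x₀)).toReal + 1,
    le_add_of_nonneg_left ENNReal.toReal_nonneg, fun x hx => ?_⟩
  set N := ⌈b⌉₊
  have hfin : ∀ y : ℝ, μ (Metric.closedBall (0:ℂ) y) ≠ ⊤ :=
    fun y => (isCompact_closedBall _ _).measure_lt_top.ne
  have hone : (1:ℝ) ≤ (2 + x) ^ (N : ℝ) :=
    Real.one_le_rpow (by linarith) (by positivity)
  rcases le_or_gt x x₀ with hle | hlt
  · have h1 : μ (Metric.closedBall (0:ℂ) x) ≤ μ (Metric.closedBall 0 x₀) :=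
      measure_mono (closedBall_subset_closedBall hle)
    rw [ENNReal.le_ofReal_iff_toReal_le (hfin x) (by positivity)]
    have h2 : (μ (Metric.closedBall (0:ℂ) x)).toReal ≤ (μ (Metric.closedBall (0:ℂ) x₀)).toReal :=
      ENNReal.toReal_mono (hfin x₀) h1
    have h2' : (0:ℝ) ≤ (μ (Metric.closedBall (0:ℂ) x₀)).toReal := ENNReal.toReal_nonneg
    nlinarith
  · have hx2 : (2:ℝ) < x := lt_of_le_of_lt (le_max_right _ _) hlt
    have hlog : 0 < Real.log x := Real.log_pos (by linarith)
    have h3 := hx₀' x (le_of_lt (lt_of_le_of_lt (le_max_left _ _) hlt))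
    rw [EReal.coe_lt_coe_iff] at h3
    have h4 : Real.log (1 + (μ (Metric.closedBall (0:ℂ) x)).toReal) < b * Real.log x :=
      (div_lt_iff₀ hlog).mp h3
    have h5 : b * Real.log x ≤ (N : ℝ) * Real.log x :=
      mul_le_mul_of_nonneg_right (Nat.le_ceil b) hlog.le
    have hmnn : (0:ℝ) ≤ (μ (Metric.closedBall (0:ℂ) x)).toReal := ENNReal.toReal_nonneg
    have h6 : 1 + (μ (Metric.closedBall (0:ℂ) x)).toReal < x ^ (N : ℝ) := by
      have := Real.exp_lt_exp.mpr (lt_of_lt_of_le h4 h5)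
      rw [mul_comm] at this
      rwa [Real.exp_log (by linarith), ← Real.rpow_def_of_pos (by linarith : (0:ℝ) < x)] at this
    have h7 : x ^ (N:ℝ) ≤ (2 + x) ^ (N : ℝ) :=
      Real.rpow_le_rpow (by linarith) (by linarith) (by positivity)
    rw [ENNReal.le_ofReal_iff_toReal_le (hfin x) (by positivity)]
    have h8 : (0:ℝ) ≤ (μ (Metric.closedBall (0:ℂ) x₀)).toReal := ENNReal.toReal_nonneg
    nlinarith

lemma intEstimate (μ : Measure ℂ) (z : ℂ) {d q : ℝ} (hd : 0 < d) (hq : 0 < q)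
    (h : ∀ τ ∈ Set.Ioc (0:ℝ) q, μ (Metric.closedBall z τ) ≤ ENNReal.ofReal (τ ^ d / q ^ d)) :
    ∫⁻ t in Set.Ioc (0:ℝ) q, μ (Metric.closedBall z t) / ENNReal.ofReal t
      ≤ ENNReal.ofReal (1 / d) := by
  have hqd : (0:ℝ) < q ^ d := Real.rpow_pos_of_pos hq d
  have step1 : ∫⁻ t in Set.Ioc (0:ℝ) q, μ (Metric.closedBall z t) / ENNReal.ofReal t
      ≤ ∫⁻ t in Set.Ioc (0:ℝ) q, ENNReal.ofReal (t ^ (d - 1) / q ^ d) := by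
    apply setLIntegral_mono
    · apply Measurable.ennreal_ofReal
      fun_prop
    · intro t ht
      have ht0 : 0 < t := ht.1
      calc μ (Metric.closedBall z t) / ENNReal.ofReal t
          ≤ ENNReal.ofReal (t ^ d / q ^ d) / ENNReal.ofReal t :=
            ENNReal.div_le_div_right (h t ht) _
        _ = ENNReal.ofReal (t ^ d / q ^ d / t) := (ENNReal.ofReal_div_of_pos ht0).symm
        _ = ENNReal.ofReal (t ^ (d - 1) / q ^ d) := by
            rw [div_right_comm]
            congr 1
            rw [Real.rpow_sub ht0, Real.rpow_one]
  refine step1.trans ?_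
  have hint : IntegrableOn (fun t : ℝ => t ^ (d - 1) / q ^ d) (Set.Ioc 0 q) := by
    have := (intervalIntegral.intervalIntegrable_rpow' (show (-1:ℝ) < d - 1 by linarith)
      (a := 0) (b := q)).div_const (q ^ d)
    rwa [intervalIntegrable_iff_integrableOn_Ioc_of_le hq.le] at this
  rw [← ofReal_integral_eq_lintegral_ofReal hint ?pos]
  case pos =>
    filter_upwards [ae_restrict_mem measurableSet_Ioc] with t ht
    have := Real.rpow_nonneg ht.1.le (d - 1)
    positivity
  apply ENNReal.ofReal_le_ofReal
  have hval : ∫ t in Set.Ioc (0:ℝ) q, t ^ (d-1) / q ^ d = 1 / d := by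
    rw [← intervalIntegral.integral_of_le hq.le, intervalIntegral.integral_div,
      integral_rpow (Or.inl (by linarith))]
    rw [sub_add_cancel, Real.zero_rpow hd.ne', sub_zero, div_right_comm,
      div_self hqd.ne']
  rw [hval]

set_option maxHeartbeats 2000000 in
/-- for a positive measure `μ` of finite order on `ℂ` and `r : ℂ → (0,1]`
with `inf_z (log r(z))/(log(2+|z|)) > -∞`, for every `d ∈ (0,2]` there is
`p : ℂ → (0,∞)` with the same logarithmic lower-bound condition and `p ≤ r`, such that
`E := {z : ∫₀^{p(z)} μ_z(t)/t dt > 1/d}` satisfies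
`𝔪_d^r(E ∩ S) ≤ sup_S r ≤ 1` for every Borel `S ⊆ ℂ`. -/
theorem stmt12 (μ : Measure ℂ) [IsFiniteMeasureOnCompacts μ]
    (hord : Filter.limsup
        (fun x : ℝ =>
          ((Real.log (1 + (μ (Metric.closedBall 0 x)).toReal) / Real.log x : ℝ) : EReal))
        Filter.atTop < (⊤ : EReal))
    (r : ℂ → ℝ) (hr : ∀ z, r z ∈ Set.Ioc (0 : ℝ) 1)
    (hinf : ∃ m : ℝ, ∀ z : ℂ, m ≤ Real.log (r z) / Real.log (2 + ‖z‖))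
    (d : ℝ) (hd : d ∈ Set.Ioc (0 : ℝ) 2) :
    ∃ p : ℂ → ℝ, (∀ z, 0 < p z) ∧
      (∃ m : ℝ, ∀ z : ℂ, m ≤ Real.log (p z) / Real.log (2 + ‖z‖)) ∧
      (∀ z, p z ≤ r z) ∧
      ∀ S : Set ℂ, MeasurableSet S →
        hausdorffContentVar d (fun z => ENNReal.ofReal (r z))
            ({z : ℂ | ENNReal.ofReal (1 / d) <
              ∫⁻ t in Set.Ioc (0 : ℝ) (p z),
                μ (Metric.closedBall z t) / ENNReal.ofReal t} ∩ S) ≤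
          ENNReal.ofReal (sSup (r '' S)) ∧ sSup (r '' S) ≤ 1 := by
  classical
  obtain ⟨N, C, hC1, hbound⟩ := orderBound μ hord
  obtain ⟨m, hm⟩ := hinf
  have hd0 : (0:ℝ) < d := hd.1
  -- the constant in the Hausdorff content
  set c : ℝ := Real.pi ^ (d / 2) / Real.Gamma (1 + d / 2) with hc
  have hc_pos : 0 < c := by
    apply div_pos (Real.rpow_pos_of_pos Real.pi_pos _)
    exact Real.Gamma_pos_of_pos (by linarith)
  -- the summable series
  have hKsum : Summable (fun n : ℕ => ((2:ℝ) + n) ^ (-2:ℝ)) := by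
    have h := Real.summable_nat_rpow.mpr (show (-2:ℝ) < -1 by norm_num)
    have h2 := (summable_nat_add_iff 2).mpr h
    refine h2.congr fun n => ?_
    push_cast
    ring_nf
  set K₀ : ℝ := ∑' n : ℕ, ((2:ℝ) + n) ^ (-2:ℝ) with hK₀def
  have hK₀ : 0 ≤ K₀ := tsum_nonneg fun n => by positivity
  set Q : ℝ := c * 4 ^ (d:ℝ) * (C * 2 ^ ((N:ℝ)) * K₀) with hQdef
  have hQ : 0 ≤ Q := by
    apply mul_nonneg (mul_nonneg hc_pos.le (by positivity))
    exact mul_nonneg (mul_nonneg (by linarith) (by positivity)) hK₀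
  set ε : ℝ := (Q + 1) ^ (-(1/d)) with hεdef
  have hεpos : 0 < ε := Real.rpow_pos_of_pos (by linarith) _
  have hε1 : ε ≤ 1 := by
    apply Real.rpow_le_one_of_one_le_of_nonpos (by linarith)
    rw [neg_nonpos]
    positivity
  have hεd : ε ^ d = (Q + 1)⁻¹ := by
    rw [hεdef, ← Real.rpow_mul (by linarith : (0:ℝ) ≤ Q + 1),
      show -(1/d) * d = -1 by field_simp, Real.rpow_neg_one]
  have hεQ : ε ^ d * Q ≤ 1 := by
    rw [hεd]
    have h1 : (Q+1)⁻¹ * Q ≤ (Q+1)⁻¹ * (Q+1) :=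
      mul_le_mul_of_nonneg_left (by linarith) (inv_nonneg.2 (by linarith))
    rwa [inv_mul_cancel₀ (by linarith : Q + 1 ≠ 0)] at h1
  set A : ℝ := ((N:ℝ) + 2) / d with hAdef
  have hA : 0 ≤ A := by positivity
  -- the function p
  set p : ℂ → ℝ := fun z =>
    ε / 5 * (r z * (r z ^ (1/d) * (2 + ‖z‖) ^ (-A))) with hp
  have habs : ∀ z : ℂ, (0:ℝ) ≤ ‖z‖ := fun z => norm_nonneg z
  have hbase : ∀ z : ℂ, (2:ℝ) ≤ 2 + ‖z‖ := fun z => by linarith [habs z]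
  have hppos : ∀ z, 0 < p z := by
    intro z
    have h1 := (hr z).1
    have h2 : (0:ℝ) < 2 + ‖z‖ := by linarith [habs z]
    rw [hp]
    positivity
  have hfac1 : ∀ z : ℂ, r z ^ (1/d) ≤ 1 := fun z =>
    Real.rpow_le_one (hr z).1.le (hr z).2 (by positivity)
  have hfac2 : ∀ z : ℂ, (2 + ‖z‖) ^ (-A) ≤ 1 := fun z =>
    Real.rpow_le_one_of_one_le_of_nonpos (by linarith [habs z]) (by linarith)
  have hple : ∀ z, 4 * p z ≤ r z := by
    intro z
    have h1 := hfac1 z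
    have h2 := hfac2 z
    have h3 := (hr z).1
    have h1' : (0:ℝ) ≤ r z ^ (1/d) := Real.rpow_nonneg h3.le _
    have h2' : (0:ℝ) ≤ (2 + ‖z‖) ^ (-A) :=
      Real.rpow_nonneg (by linarith [habs z]) _
    have key : r z ^ (1/d) * (2 + ‖z‖) ^ (-A) ≤ 1 := by nlinarith
    have key2 : r z * (r z ^ (1/d) * (2 + ‖z‖) ^ (-A)) ≤ r z := by nlinarith
    have hnn : 0 ≤ r z * (r z ^ (1/d) * (2 + ‖z‖) ^ (-A)) := by positivity
    rw [hp]
    simp only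
    nlinarith
  have hpler : ∀ z, p z ≤ r z := fun z => by nlinarith [hple z, hppos z]
  -- the logarithmic lower bound for p
  have hlogp : ∃ m' : ℝ, ∀ z : ℂ, m' ≤ Real.log (p z) / Real.log (2 + ‖z‖) := by
    refine ⟨Real.log (ε/5) / Real.log 2 + m + m / d + (-A), fun z => ?_⟩
    have hL : 0 < Real.log (2 + ‖z‖) := Real.log_pos (by linarith [habs z])
    have hL2 : Real.log 2 ≤ Real.log (2 + ‖z‖) :=
      Real.log_le_log (by norm_num) (hbase z)
    have hlog2 : (0:ℝ) < Real.log 2 := Real.log_pos (by norm_num)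
    have hrz := (hr z).1
    have hbz : (0:ℝ) < 2 + ‖z‖ := by linarith [habs z]
    have hsplit : Real.log (p z) =
        Real.log (ε/5) + Real.log (r z) + (1/d) * Real.log (r z)
          + (-A) * Real.log (2 + ‖z‖) := by
      rw [hp]; simp only
      rw [Real.log_mul (by positivity) (by positivity),
        Real.log_mul (by positivity) (by positivity),
        Real.log_mul (by positivity) (by positivity),
        Real.log_rpow hrz, Real.log_rpow hbz]
      ring
    rw [le_div_iff₀ hL]
    rw [hsplit]
    have e1 : Real.log (ε/5) / Real.log 2 * Real.log (2 + ‖z‖) ≤ Real.log (ε/5) := by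
      have hneg : Real.log (ε/5) ≤ 0 := Real.log_nonpos (by positivity) (by linarith)
      have : Real.log (ε/5) / Real.log 2 ≤ 0 := div_nonpos_iff.2 (Or.inr ⟨hneg, hlog2.le⟩)
      calc Real.log (ε/5) / Real.log 2 * Real.log (2 + ‖z‖)
          ≤ Real.log (ε/5) / Real.log 2 * Real.log 2 :=
            mul_le_mul_of_nonpos_left hL2 this
        _ = Real.log (ε/5) := by field_simp
    have e2 : m * Real.log (2 + ‖z‖) ≤ Real.log (r z) :=
      (le_div_iff₀ hL).mp (hm z)
    have e3 : m / d * Real.log (2 + ‖z‖) ≤ (1/d) * Real.log (r z) := by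
      have := mul_le_mul_of_nonneg_left e2 (le_of_lt (by positivity : (0:ℝ) < 1/d))
      calc m / d * Real.log (2 + ‖z‖)
          = 1/d * (m * Real.log (2 + ‖z‖)) := by ring
        _ ≤ 1/d * Real.log (r z) := this
    nlinarith
  obtain ⟨m', hm'⟩ := hlogp
  refine ⟨p, hppos, ⟨m', hm'⟩, hpler, ?_⟩
  intro S _hS
  set E : Set ℂ := {z : ℂ | ENNReal.ofReal (1 / d) <
      ∫⁻ t in Set.Ioc (0 : ℝ) (p z),
        μ (Metric.closedBall z t) / ENNReal.ofReal t} with hE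
  -- second part : sSup (r '' S) ≤ 1
  have hsup1 : sSup (r '' S) ≤ 1 := by
    rcases S.eq_empty_or_nonempty with rfl | hSne
    · simp [Real.sSup_empty]
    · exact csSup_le (hSne.image r) (by rintro y ⟨z, -, rfl⟩; exact (hr z).2)
  have hsup0 : 0 ≤ sSup (r '' S) :=
    Real.sSup_nonneg (by rintro y ⟨z, -, rfl⟩; exact (hr z).1.le)
  have hbdd : BddAbove (r '' S) := ⟨1, by rintro y ⟨z, -, rfl⟩; exact (hr z).2⟩
  refine ⟨?_, hsup1⟩
  -- existence of a witness radius for each point of E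
  have hwit : ∀ z ∈ E, ∃ τ, τ ∈ Set.Ioc (0:ℝ) (p z) ∧
      ENNReal.ofReal (τ ^ d / p z ^ d) < μ (Metric.closedBall z τ) := by
    intro z hz
    by_contra hcon
    push_neg at hcon
    have := intEstimate μ z hd0 (hppos z) hcon
    exact absurd hz (by simp only [hE, mem_setOf_eq, not_lt]; exact this)
  set T : ℂ → ℝ := fun z =>
    if h : ∃ τ, τ ∈ Set.Ioc (0:ℝ) (p z) ∧
        ENNReal.ofReal (τ ^ d / p z ^ d) < μ (Metric.closedBall z τ)
    then h.choose else 0 with hTdef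
  have hT1 : ∀ z ∈ E, T z ∈ Set.Ioc (0:ℝ) (p z) := by
    intro z hz
    rw [hTdef]; simp only
    rw [dif_pos (hwit z hz)]
    exact (hwit z hz).choose_spec.1
  have hT2 : ∀ z ∈ E, ENNReal.ofReal (T z ^ d / p z ^ d) < μ (Metric.closedBall z (T z)) := by
    intro z hz
    rw [hTdef]; simp only
    rw [dif_pos (hwit z hz)]
    exact (hwit z hz).choose_spec.2
  -- Vitali covering
  have hTle1 : ∀ a ∈ E ∩ S, T a ≤ 1 :=
    fun a ha => le_trans (hT1 a ha.1).2 (le_trans (hpler a) (hr a).2)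
  obtain ⟨u, husub, hudisj, hucov⟩ :=
    Vitali.exists_disjoint_subfamily_covering_enlargement_closedBall (E ∩ S) id T 1
      hTle1 4 (by norm_num)
  have hTposu : ∀ b ∈ u, 0 < T b := fun b hb => (hT1 b (husub hb).1).1
  have hucnt : u.Countable :=
    hudisj.countable_of_nonempty_interior fun b hb =>
      ⟨b, ball_subset_interior_closedBall (mem_ball_self (hTposu b hb))⟩
  set e : ℕ → ℂ := Set.enumerateCountable hucnt 0 with hedef
  have hrange : u ⊆ Set.range e := Set.subset_range_enumerate hucnt 0
  set good : ℕ → Prop := fun k => e k ∈ u ∧ ∀ j < k, e j ≠ e k with hgooddef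
  set ρ : ℕ → ℝ := fun k => if good k then 4 * T (e k) else 0 with hρdef
  have hgood_mem : ∀ k, good k → e k ∈ E ∩ S := fun k hk => husub hk.1
  -- injectivity on good indices
  have hinj : ∀ k j, good k → good j → k ≠ j → e k ≠ e j := by
    intro k j hk hj hne heq
    rcases lt_or_gt_of_ne hne with h | h
    · exact hj.2 k h heq
    · exact hk.2 j h heq.symm
  -- basic properties of the chosen cover
  have h0 : ∀ k, 0 ≤ ρ k := by
    intro k
    rw [hρdef]; simp only
    split_ifs with h
    · have := hTposu (e k) h.1; linarith
    · exact le_rfl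
  -- admissibility of radii
  have hle' : ∀ k, ENNReal.ofReal (ρ k) ≤ (fun z => ENNReal.ofReal (r z)) (e k) := by
    intro k
    simp only
    apply ENNReal.ofReal_le_ofReal
    rw [hρdef]; simp only
    split_ifs with h
    · have hk := hgood_mem k h
      have h1 := (hT1 (e k) hk.1).2
      have h2 := hple (e k)
      linarith
    · exact (hr (e k)).1.le
  -- the covering property
  have hcov : E ∩ S ⊆ ⋃ k, Metric.closedBall (e k) (ρ k) := by
    intro a ha
    obtain ⟨b, hbu, hsub⟩ := hucov a ha
    have haT : a ∈ Metric.closedBall (id a) (T a) :=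
      mem_closedBall_self (hT1 a ha.1).1.le
    have hab := hsub haT
    have hex : ∃ k, e k = b := hrange hbu
    have hek : e (Nat.find hex) = b := Nat.find_spec hex
    have hgoodk : good (Nat.find hex) := by
      constructor
      · rw [hek]; exact hbu
      · intro j hj heq
        exact Nat.find_min hex hj (heq.trans hek)
    refine mem_iUnion.2 ⟨Nat.find hex, ?_⟩
    rw [hρdef]; simp only
    rw [if_pos hgoodk, hek]
    exact hab
  -- the content is bounded by the sum over the chosen cover
  have hcontent : hausdorffContentVar d (fun z => ENNReal.ofReal (r z)) (E ∩ S)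
      ≤ ∑' k, ENNReal.ofReal (c * ρ k ^ d) :=
    iInf_le_of_le e (iInf_le_of_le ρ (iInf_le_of_le h0 (iInf_le_of_le hle'
      (iInf_le_of_le hcov le_rfl))))
  -- auxiliary data for the summation estimate
  set nn : ℕ → ℕ := fun k => ⌊‖e k‖⌋₊ with hnn
  set Bs : ℕ → Set ℂ := fun k =>
    if good k then Metric.closedBall (e k) (T (e k)) else ∅ with hBs
  set w : ℕ → ℝ≥0∞ := fun n => ENNReal.ofReal (((2:ℝ) + n) ^ (-((N:ℝ) + 2))) with hw
  set Sup : ℝ := sSup (r '' S) with hSupdef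
  set G : ℝ := c * 4 ^ d * ε ^ d with hG
  have hG0 : 0 ≤ G := mul_nonneg (mul_nonneg hc_pos.le (by positivity)) (by positivity)
  have hBmeas : ∀ k, MeasurableSet (Bs k) := by
    intro k
    rw [hBs]; simp only
    split_ifs
    · exact measurableSet_closedBall
    · exact MeasurableSet.empty
  have hBdisj : Pairwise (Function.onFun Disjoint Bs) := by
    intro k j hkj
    rw [Function.onFun, hBs]; simp only
    split_ifs with hk hj hj
    · exact hudisj hk.1 hj.1 (hinj k j hk hj hkj)
    · exact disjoint_empty _
    · exact empty_disjoint _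
    · exact empty_disjoint _
  -- the per-term estimate
  have hterm : ∀ k, ENNReal.ofReal (c * ρ k ^ d)
      ≤ ENNReal.ofReal (Sup * G) * (w (nn k) * μ (Bs k)) := by
    intro k
    by_cases hgk : good k
    swap
    · rw [hρdef]; simp only [if_neg hgk]
      rw [Real.zero_rpow hd0.ne', mul_zero, ENNReal.ofReal_zero]
      exact zero_le
    · have hbES := hgood_mem k hgk
      have hbE := hbES.1
      have hbS := hbES.2
      have hTb := hT1 (e k) hbE
      have hTbpos : 0 < T (e k) := hTb.1
      have hpb := hppos (e k)
      have hrb := (hr (e k)).1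
      have hBsk : Bs k = Metric.closedBall (e k) (T (e k)) := by
        rw [hBs]; simp only [if_pos hgk]
      have hρk : ρ k = 4 * T (e k) := by rw [hρdef]; simp only [if_pos hgk]
      have hbz : (0:ℝ) < 2 + ‖e k‖ := by linarith [habs (e k)]
      -- the real estimate on p (e k) ^ d
      have hsplit : p (e k) ^ d =
          (ε/5) ^ d * (r (e k) ^ d
            * (r (e k) * (2 + ‖e k‖) ^ (-((N:ℝ)+2)))) := by
        rw [hp]; simp only
        rw [Real.mul_rpow (by positivity)
              (mul_nonneg hrb.le (mul_nonneg (by positivity) (by positivity))),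
            Real.mul_rpow hrb.le (mul_nonneg (by positivity) (by positivity)),
            Real.mul_rpow (by positivity) (by positivity),
            ← Real.rpow_mul hrb.le, ← Real.rpow_mul hbz.le,
            one_div, inv_mul_cancel₀ hd0.ne', Real.rpow_one,
            show (-A) * d = -((N:ℝ)+2) by rw [hAdef]; field_simp]
      have hmono : (2 + ‖e k‖) ^ (-((N:ℝ)+2))
          ≤ ((2:ℝ) + (nn k : ℝ)) ^ (-((N:ℝ)+2)) := by
        have hfl : (nn k : ℝ) ≤ ‖e k‖ := by
          rw [hnn]; exact Nat.floor_le (habs (e k))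
        exact Real.rpow_le_rpow_of_nonpos (by positivity) (by linarith)
          (neg_nonpos.2 (by positivity))
      have hrb1 : r (e k) ^ d ≤ 1 := Real.rpow_le_one hrb.le (hr (e k)).2 hd0.le
      have hrbSup : r (e k) ≤ Sup := le_csSup hbdd (mem_image_of_mem r hbS)
      have hε5 : (ε/5) ^ d ≤ ε ^ d :=
        Real.rpow_le_rpow (by positivity) (by linarith) hd0.le
      have hXnn : (0:ℝ) ≤ (2 + ‖e k‖) ^ (-((N:ℝ)+2)) := by positivity
      have hkey2 : p (e k) ^ d
          ≤ ε ^ d * (Sup * ((2:ℝ) + (nn k : ℝ)) ^ (-((N:ℝ)+2))) := by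
        rw [hsplit]
        have inner1 : r (e k) * (2 + ‖e k‖) ^ (-((N:ℝ)+2))
            ≤ Sup * ((2:ℝ) + (nn k : ℝ)) ^ (-((N:ℝ)+2)) :=
          mul_le_mul hrbSup hmono hXnn hsup0
        have inner2 : r (e k) ^ d
              * (r (e k) * (2 + ‖e k‖) ^ (-((N:ℝ)+2)))
            ≤ 1 * (Sup * ((2:ℝ) + (nn k : ℝ)) ^ (-((N:ℝ)+2))) :=
          mul_le_mul hrb1 inner1 (mul_nonneg hrb.le hXnn) zero_le_one
        calc (ε/5) ^ d * (r (e k) ^ d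
              * (r (e k) * (2 + ‖e k‖) ^ (-((N:ℝ)+2))))
            ≤ ε ^ d * (1 * (Sup * ((2:ℝ) + (nn k : ℝ)) ^ (-((N:ℝ)+2)))) :=
              mul_le_mul hε5 inner2
                (mul_nonneg (Real.rpow_nonneg hrb.le _) (mul_nonneg hrb.le hXnn))
                (by positivity)
          _ = ε ^ d * (Sup * ((2:ℝ) + (nn k : ℝ)) ^ (-((N:ℝ)+2))) := by ring
      -- ENNReal computation
      have hc4 : (0:ℝ) ≤ c * 4 ^ d := mul_nonneg hc_pos.le (by positivity)
      have key1 : ENNReal.ofReal (T (e k) ^ d)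
          ≤ ENNReal.ofReal (p (e k) ^ d) * μ (Metric.closedBall (e k) (T (e k))) := by
        have h2 := (hT2 (e k) hbE).le
        have hpd : (0:ℝ) < p (e k) ^ d := Real.rpow_pos_of_pos hpb d
        calc ENNReal.ofReal (T (e k) ^ d)
            = ENNReal.ofReal (T (e k) ^ d / p (e k) ^ d * (p (e k) ^ d)) := by
              rw [div_mul_cancel₀ _ hpd.ne']
          _ = ENNReal.ofReal (T (e k) ^ d / p (e k) ^ d)
              * ENNReal.ofReal (p (e k) ^ d) :=
              ENNReal.ofReal_mul (by positivity)
          _ ≤ μ (Metric.closedBall (e k) (T (e k))) * ENNReal.ofReal (p (e k) ^ d) :=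
              mul_le_mul_left h2 _
          _ = ENNReal.ofReal (p (e k) ^ d) * μ (Metric.closedBall (e k) (T (e k))) :=
              mul_comm _ _
      calc ENNReal.ofReal (c * ρ k ^ d)
          = ENNReal.ofReal (c * 4 ^ d) * ENNReal.ofReal (T (e k) ^ d) := by
            rw [hρk, Real.mul_rpow (by norm_num) hTbpos.le,
              show c * (4 ^ d * T (e k) ^ d) = c * 4 ^ d * T (e k) ^ d by ring,
              ENNReal.ofReal_mul hc4]
        _ ≤ ENNReal.ofReal (c * 4 ^ d)
            * (ENNReal.ofReal (p (e k) ^ d) * μ (Metric.closedBall (e k) (T (e k)))) :=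
            mul_le_mul_right key1 _
        _ ≤ ENNReal.ofReal (c * 4 ^ d)
            * (ENNReal.ofReal (ε ^ d * (Sup * ((2:ℝ) + (nn k : ℝ)) ^ (-((N:ℝ)+2))))
              * μ (Metric.closedBall (e k) (T (e k)))) :=
            mul_le_mul_right (mul_le_mul_left (ENNReal.ofReal_le_ofReal hkey2) _) _
        _ = ENNReal.ofReal (Sup * G) * (w (nn k) * μ (Bs k)) := by
            rw [hBsk, hw]; simp only
            rw [← mul_assoc, ← ENNReal.ofReal_mul hc4,
              show c * 4 ^ d * (ε ^ d * (Sup * ((2:ℝ) + (nn k : ℝ)) ^ (-((N:ℝ)+2))))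
                  = Sup * G * (((2:ℝ) + (nn k : ℝ)) ^ (-((N:ℝ)+2))) by rw [hG]; ring,
              ENNReal.ofReal_mul (mul_nonneg hsup0 hG0), mul_assoc]
  -- summation over annuli
  have hgsum : ∑' k, (w (nn k) * μ (Bs k)) ≤ ENNReal.ofReal (C * 2 ^ (N:ℝ) * K₀) := by
    have hCN : (0:ℝ) ≤ C * 2 ^ (N:ℝ) := mul_nonneg (by linarith) (by positivity)
    calc ∑' k, (w (nn k) * μ (Bs k))
        = ∑' k, ∑' n : ℕ, (if n = nn k then w n * μ (Bs k) else 0) := by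
          refine tsum_congr fun k => ?_
          rw [show (fun n : ℕ => if n = nn k then w n * μ (Bs k) else 0)
              = (fun n : ℕ => if n = nn k then w (nn k) * μ (Bs k) else 0) from
              funext fun n => by split_ifs with h <;> simp [h]]
          exact (tsum_ite_eq (nn k) (fun _ => w (nn k) * μ (Bs k))).symm
      _ = ∑' n : ℕ, ∑' k, (if n = nn k then w n * μ (Bs k) else 0) := ENNReal.tsum_comm
      _ ≤ ∑' n : ℕ, ENNReal.ofReal ((C * 2 ^ (N:ℝ)) * ((2:ℝ) + n) ^ (-2:ℝ)) := by
          refine ENNReal.tsum_le_tsum fun n => ?_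
          have hsubif : ∀ k, (if n = nn k then Bs k else ∅) ⊆ Bs k := fun k => by
            split_ifs
            · exact subset_rfl
            · exact empty_subset _
          have hdisjn : Pairwise (Function.onFun Disjoint
              (fun k => if n = nn k then Bs k else ∅)) :=
            fun k j hkj => (hBdisj hkj).mono (hsubif k) (hsubif j)
          have hmeasn : ∀ k, MeasurableSet (if n = nn k then Bs k else ∅) := fun k => by
            split_ifs
            · exact hBmeas k
            · exact MeasurableSet.empty
          have hBsub : ∀ k, (if n = nn k then Bs k else ∅)
              ⊆ Metric.closedBall 0 ((n:ℝ) + 2) := by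
            intro k x hx
            split_ifs at hx with hcond
            · rw [hBs] at hx; simp only at hx
              split_ifs at hx with hgk
              · have h1 : dist x (e k) ≤ T (e k) := mem_closedBall.1 hx
                have hTk : T (e k) ≤ 1 := hTle1 (e k) (hgood_mem k hgk)
                have h2 : ‖e k‖ < (nn k : ℝ) + 1 := by
                  rw [hnn]; exact_mod_cast Nat.lt_floor_add_one (‖e k‖)
                have h3 : dist (e k) (0:ℂ) = ‖e k‖ := by
                  rw [Complex.dist_eq, sub_zero]
                have : dist x (0:ℂ) ≤ (n:ℝ) + 2 := by
                  have h4 := dist_triangle x (e k) 0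
                  have h5 : ((nn k : ℕ) : ℝ) = (n : ℝ) := by rw [hcond]
                  rw [h3] at h4
                  linarith
                exact mem_closedBall.2 this
              · exact absurd hx (notMem_empty x)
            · exact absurd hx (notMem_empty x)
          calc ∑' k, (if n = nn k then w n * μ (Bs k) else 0)
              = ∑' k, w n * μ (if n = nn k then Bs k else ∅) := by
                refine tsum_congr fun k => ?_
                split_ifs
                · rfl
                · simp
            _ = w n * ∑' k, μ (if n = nn k then Bs k else ∅) := ENNReal.tsum_mul_left
            _ = w n * μ (⋃ k, if n = nn k then Bs k else ∅) := by
                rw [measure_iUnion hdisjn hmeasn]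
            _ ≤ w n * μ (Metric.closedBall 0 ((n:ℝ) + 2)) :=
                mul_le_mul_right (measure_mono (iUnion_subset hBsub)) _
            _ ≤ w n * ENNReal.ofReal (C * (2 + ((n:ℝ) + 2)) ^ (N:ℝ)) :=
                mul_le_mul_right (hbound ((n:ℝ) + 2) (by positivity)) _
            _ ≤ ENNReal.ofReal ((C * 2 ^ (N:ℝ)) * ((2:ℝ) + n) ^ (-2:ℝ)) := by
                rw [hw]; simp only
                rw [← ENNReal.ofReal_mul (by positivity)]
                apply ENNReal.ofReal_le_ofReal
                set y : ℝ := (2:ℝ) + n with hy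
                have hy2 : (2:ℝ) ≤ y := by rw [hy]; simp [Nat.cast_nonneg]
                have h2 : (y + 2) ^ (N:ℝ) ≤ (2*y) ^ (N:ℝ) :=
                  Real.rpow_le_rpow (by linarith) (by linarith) (by positivity)
                have h3 : ((2:ℝ)*y) ^ (N:ℝ) = 2 ^ (N:ℝ) * y ^ (N:ℝ) :=
                  Real.mul_rpow (by norm_num) (by linarith)
                have h4 : y ^ (-((N:ℝ)+2)) * y ^ (N:ℝ) = y ^ (-2:ℝ) := by
                  rw [← Real.rpow_add (by linarith)]; ring_nf
                have h5 : (2:ℝ) + ((n:ℝ) + 2) = y + 2 := by rw [hy]; ring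
                calc y ^ (-((N:ℝ)+2)) * (C * (2 + ((n:ℝ) + 2)) ^ (N:ℝ))
                    = C * (y ^ (-((N:ℝ)+2)) * (y + 2) ^ (N:ℝ)) := by rw [h5]; ring
                  _ ≤ C * (y ^ (-((N:ℝ)+2)) * (2 ^ (N:ℝ) * y ^ (N:ℝ))) := by
                      apply mul_le_mul_of_nonneg_left ?_ (by linarith : (0:ℝ) ≤ C)
                      exact mul_le_mul_of_nonneg_left (h2.trans_eq h3)
                        (Real.rpow_nonneg (by linarith) _)
                  _ = C * 2 ^ (N:ℝ) * (y ^ (-((N:ℝ)+2)) * y ^ (N:ℝ)) := by ring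
                  _ = C * 2 ^ (N:ℝ) * y ^ (-2:ℝ) := by rw [h4]
      _ = ENNReal.ofReal (C * 2 ^ (N:ℝ) * K₀) := by
          have : ∀ n : ℕ, ENNReal.ofReal ((C * 2 ^ (N:ℝ)) * ((2:ℝ) + n) ^ (-2:ℝ))
              = ENNReal.ofReal (C * 2 ^ (N:ℝ)) * ENNReal.ofReal (((2:ℝ) + n) ^ (-2:ℝ)) :=
            fun n => ENNReal.ofReal_mul hCN
          rw [tsum_congr this, ENNReal.tsum_mul_left, hK₀def,
            ← ENNReal.ofReal_tsum_of_nonneg (fun n => by positivity) hKsum,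
            ← ENNReal.ofReal_mul hCN]
  -- final assembly
  calc hausdorffContentVar d (fun z => ENNReal.ofReal (r z)) (E ∩ S)
      ≤ ∑' k, ENNReal.ofReal (c * ρ k ^ d) := hcontent
    _ ≤ ∑' k, ENNReal.ofReal (Sup * G) * (w (nn k) * μ (Bs k)) :=
        ENNReal.tsum_le_tsum hterm
    _ = ENNReal.ofReal (Sup * G) * ∑' k, (w (nn k) * μ (Bs k)) := ENNReal.tsum_mul_left
    _ ≤ ENNReal.ofReal (Sup * G) * ENNReal.ofReal (C * 2 ^ (N:ℝ) * K₀) :=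
        mul_le_mul_right hgsum _
    _ = ENNReal.ofReal (Sup * G * (C * 2 ^ (N:ℝ) * K₀)) :=
        (ENNReal.ofReal_mul (mul_nonneg hsup0 hG0)).symm
    _ ≤ ENNReal.ofReal Sup := by
        apply ENNReal.ofReal_le_ofReal
        have hGQ : G * (C * 2 ^ (N:ℝ) * K₀) = ε ^ d * Q := by rw [hG, hQdef]; ring
        calc Sup * G * (C * 2 ^ (N:ℝ) * K₀)
            = Sup * (G * (C * 2 ^ (N:ℝ) * K₀)) := by ring
          _ = Sup * (ε ^ d * Q) := by rw [hGQ]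
          _ ≤ Sup * 1 := mul_le_mul_of_nonneg_left hεQ hsup0
          _ = Sup := mul_one _
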